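/- Let k be an algebraically closed field and R a standard graded quadratic k-algebra with dim_k R_2 = 1, no socle elements in degree 1, and R not Artinian. Then R is isomorphic to a polynomial ring in one variable over k (i.e., dim_k R_1 = 1). -/

import Mathlib

open MvPolynomial

/-- The degree-`i` homogeneous component of the standard graded algebra
`R = k[x₁,…,xₙ]/I`, realized as the image of the homogeneous polynomials of degree `i`
in the quotient. -/
noncomputable def quadPiece (k : Type*) [Field k] (n : ℕ)
    (I : Ideal (MvPolynomial (Fin n) k)) (i : ℕ) :
    Submodule k (MvPolynomial (Fin n) k ⧸ I) :=
  (MvPolynomial.homogeneousSubmodule (Fin n) k i).map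
    (Ideal.Quotient.mkₐ k I).toLinearMap

/-!
A nonzero `x ∈ R₁` with `x² = 0` exists as soon as `dim R₁ ≥ 2`, because a quadratic form
in two variables over an algebraically closed field has a nontrivial zero. Since `x` is not in
the socle, `x y ≠ 0` for some `y ∈ R₁`, so `x y` spans `R₂`; then every `v · R₂` lies in
`x · R₂ = k · x² y = 0`, hence `R₃ = R₁ R₂ = 0`, contradicting that `R` is not Artinian.
-/

open Module Submodule

section Algebra

variable {k M A : Type*} [Field k] [AddCommGroup M] [Module k M] [CommRing A] [Algebra k A]

theorem Submodule.eq_span_singleton_of_finrank_eq_one {W : Submodule k M}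
    (hW : finrank k W = 1) {z : M} (hz : z ∈ W) (hz0 : z ≠ 0) : W = k ∙ z := by
  have : FiniteDimensional k W := Module.finite_of_finrank_eq_succ hW
  refine (eq_of_le_of_finrank_eq ((span_singleton_le_iff_mem z W).2 hz) ?_).symm
  rw [finrank_span_singleton hz0, hW]

theorem exists_linearIndependent_pair_mem_of_one_lt_finrank {V : Submodule k M}
    (hV : 1 < finrank k V) : ∃ e ∈ V, ∃ f ∈ V, LinearIndependent k ![e, f] := by
  have := Module.nontrivial_of_finrank_pos (zero_lt_one.trans hV)
  obtain ⟨e, he⟩ := exists_ne (0 : V)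
  obtain ⟨f, hef⟩ := exists_linearIndependent_pair_of_one_lt_finrank hV he
  refine ⟨e, e.2, f, f.2, ?_⟩
  refine LinearIndependent.pair_iff.2 fun s t hst ↦ LinearIndependent.pair_iff.1 hef s t ?_
  exact Subtype.ext hst

theorem exists_ne_zero_mul_self_eq_zero [IsAlgClosed k] {V W : Submodule k A}
    (hVV : V * V ≤ W) (hW : finrank k W = 1) (hV : 1 < finrank k V) :
    ∃ x ∈ V, x ≠ 0 ∧ x * x = 0 := by
  obtain ⟨e, he, f, hf, hef⟩ := exists_linearIndependent_pair_mem_of_one_lt_finrank hV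
  by_cases hee : e * e = 0
  · exact ⟨e, he, hef.ne_zero 0, hee⟩
  have hWe := eq_span_singleton_of_finrank_eq_one hW (hVV (mul_mem_mul he he)) hee
  obtain ⟨b, hb⟩ := mem_span_singleton.1 (hWe ▸ hVV (mul_mem_mul he hf))
  obtain ⟨d, hd⟩ := mem_span_singleton.1 (hWe ▸ hVV (mul_mem_mul hf hf))
  -- completing the square, valid in every characteristic
  obtain ⟨s, hs⟩ := IsAlgClosed.exists_eq_mul_self (b ^ 2 - d)
  refine ⟨(s - b) • e + f, add_mem (smul_mem V _ he) hf, fun h ↦ ?_, ?_⟩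
  · exact one_ne_zero (LinearIndependent.pair_iff.1 hef (s - b) 1 (by rwa [one_smul])).2
  · have hcoeff : (s - b) ^ 2 + 2 * (s - b) * b + d = 0 := by linear_combination -hs
    have hsq : ((s - b) • e + f) * ((s - b) • e + f) =
        ((s - b) ^ 2 + 2 * (s - b) * b + d) • (e * e) := by
      simp only [Algebra.smul_def, map_add, map_mul, map_pow, map_ofNat] at hb hd ⊢
      linear_combination (-(2 * algebraMap k A (s - b))) * hb - hd
    rw [hsq, hcoeff, zero_smul]

theorem mul_eq_bot_of_mul_self_eq_zero {V W : Submodule k A} (hVV : V * V ≤ W)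
    (hW : finrank k W = 1) {x y : A} (hx : x ∈ V) (hy : y ∈ V) (hxx : x * x = 0)
    (hxy : x * y ≠ 0) : V * W = ⊥ := by
  have hWxy := eq_span_singleton_of_finrank_eq_one hW (hVV (mul_mem_mul hx hy)) hxy
  rw [eq_bot_iff, mul_le]
  intro v hv w hw
  obtain ⟨c, rfl⟩ := mem_span_singleton.1 (hWxy ▸ hw)
  obtain ⟨c', hc'⟩ := mem_span_singleton.1 (hWxy ▸ hVV (mul_mem_mul hv hy))
  rw [mem_bot]
  simp only [Algebra.smul_def] at hc' ⊢
  linear_combination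
    (-(algebraMap k A c * x)) * hc' + (algebraMap k A c * algebraMap k A c' * y) * hxx

end Algebra

section Pieces

variable (k : Type*) [Field k] (n : ℕ) (I : Ideal (MvPolynomial (Fin n) k))

theorem quadPiece_eq_pow (i : ℕ) : quadPiece k n I i = quadPiece k n I 1 ^ i := by
  simp only [quadPiece, ← Submodule.map_pow, homogeneousSubmodule_one_pow]

theorem quadPiece_succ (i : ℕ) :
    quadPiece k n I (i + 1) = quadPiece k n I 1 * quadPiece k n I i := by
  rw [quadPiece_eq_pow, quadPiece_eq_pow k n I i, Submodule.pow_succ, Submodule.mul_comm]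

instance quadPiece_one_finiteDimensional : FiniteDimensional k (quadPiece k n I 1) :=
  Module.Finite.iff_fg.2 ((homogeneousSubmodule_fg (σ := Fin n) (R := k) 1).map _)

end Pieces

theorem stmt_13_general {k : Type*} [Field k] [IsAlgClosed k] (n : ℕ)
    (I : Ideal (MvPolynomial (Fin n) k))
    (hdim2 : Module.finrank k (quadPiece k n I 2) = 1)
    (hsocle : ∀ x ∈ quadPiece k n I 1, (∀ y ∈ quadPiece k n I 1, x * y = 0) → x = 0)
    (hnonArt : ∀ i : ℕ, quadPiece k n I i ≠ ⊥) :
    Module.finrank k (quadPiece k n I 1) = 1 := by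
  set V := quadPiece k n I 1
  have hVV : V * V ≤ quadPiece k n I 2 := (quadPiece_succ k n I 1).ge
  rcases lt_trichotomy (finrank k V) 1 with hlt | heq | hgt
  · exact (hnonArt 1 (Submodule.finrank_eq_zero.1 (Nat.lt_one_iff.1 hlt))).elim
  · exact heq
  obtain ⟨x, hxV, hx0, hxx⟩ := exists_ne_zero_mul_self_eq_zero hVV hdim2 hgt
  obtain ⟨y, hyV, hxy⟩ : ∃ y ∈ V, x * y ≠ 0 := by
    by_contra! h
    exact hx0 (hsocle x hxV h)
  have hVW := mul_eq_bot_of_mul_self_eq_zero hVV hdim2 hxV hyV hxx hxy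
  exact (hnonArt 3 ((quadPiece_succ k n I 2).trans hVW)).elim

/-- Let `k` be algebraically closed and `R` a standard graded
quadratic `k`-algebra with `dim_k R_2 = 1`, no socle elements in degree one, and `R`
non-Artinian.  Then `dim_k R_1 = 1`, i.e. `R` is a polynomial ring in one variable. -/
theorem stmt_13 {k : Type*} [Field k] [IsAlgClosed k] (n : ℕ)
    (I : Ideal (MvPolynomial (Fin n) k))
    (hquad : ∃ S : Set (MvPolynomial (Fin n) k),
      (∀ f ∈ S, f.IsHomogeneous 2) ∧ I = Ideal.span S)
    (hdim2 : Module.finrank k (quadPiece k n I 2) = 1)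
    (hsocle : ∀ x ∈ quadPiece k n I 1, (∀ y ∈ quadPiece k n I 1, x * y = 0) → x = 0)
    (hnonArt : ∀ i : ℕ, quadPiece k n I i ≠ ⊥) :
    Module.finrank k (quadPiece k n I 1) = 1 :=
  stmt_13_general n I hdim2 hsocle hnonArt
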